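/- arXiv:1303.5918 — 2 statements merged into one kernel-verified Lean document; each statement's English description precedes it below -/
import Mathlib

section
/- Let G be a group and u : G → ℝ a homomorphism into the additive group of the real numbers. Let I be a finite index set and suppose given, for each i ∈ I, an element λ_i of the group ring ℤ[G], an element g_i ∈ ker(u), and signs ε_i, δ_i ∈ {1, −1}. Then the element Σ_{i∈I} λ_i · (ε_i·1 + δ_i·[g_i]) of ℤ[G] is not equal to 1. -/
/-!
The augmentation `ℤ[G] → ℤ`, `[g] ↦ 1`, sends each `εᵢ·1 + δᵢ·[gᵢ]` to `εᵢ + δᵢ`, a sum of two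
odd integers. So the left ideal these elements generate consists of elements of even
augmentation, and cannot contain `1`.
-/

open MonoidAlgebra

namespace MonoidAlgebra

variable (k : Type*) {G : Type*} [CommSemiring k] [Monoid G]

noncomputable def augmentation : MonoidAlgebra k G →ₐ[k] k :=
  lift k k G 1

@[simp]
theorem augmentation_single (g : G) (r : k) : augmentation k (single g r) = r := by
  simp [augmentation, lift_single]

end MonoidAlgebra

section Parity

variable {G : Type*} [Monoid G]

theorem odd_of_eq_one_or_eq_neg_one {n : ℤ} (h : n = 1 ∨ n = -1) : Odd n := by
  rcases h with rfl | rfl <;> decide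

theorem even_augmentation_intCast_add_intCast_mul_of {ε δ : ℤ} (hε : Odd ε) (hδ : Odd δ)
    (g : G) :
    Even (augmentation ℤ ((ε : MonoidAlgebra ℤ G) + (δ : MonoidAlgebra ℤ G) * of ℤ G g)) := by
  simpa using hε.add_odd hδ

theorem even_augmentation_sum_mul {ι : Type*} (s : Finset ι) (lam x : ι → MonoidAlgebra ℤ G)
    (hx : ∀ i ∈ s, Even (augmentation ℤ (x i))) :
    Even (augmentation ℤ (∑ i ∈ s, lam i * x i)) := by
  rw [map_sum]
  exact Finset.even_sum _ fun i hi ↦ by simpa only [map_mul] using (hx i hi).mul_left _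

end Parity

theorem sum_signed_ker_combinations_ne_one_general
    {G : Type*} [Group G]
    {I : Type*} [Fintype I]
    (lam : I → MonoidAlgebra ℤ G) (g : I → G)
    (ε δ : I → ℤ) (hε : ∀ i, ε i = 1 ∨ ε i = -1) (hδ : ∀ i, δ i = 1 ∨ δ i = -1) :
    ∑ i : I, lam i * ((ε i : MonoidAlgebra ℤ G)
      + (δ i : MonoidAlgebra ℤ G) * MonoidAlgebra.of ℤ G (g i)) ≠ 1 := by
  intro h
  have hEven := even_augmentation_sum_mul Finset.univ lam _ fun i _ ↦
    even_augmentation_intCast_add_intCast_mul_of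
      (odd_of_eq_one_or_eq_neg_one (hε i)) (odd_of_eq_one_or_eq_neg_one (hδ i)) (g i)
  rw [h, map_one] at hEven
  exact Int.not_even_one hEven

/-- The algebraic core of Lemma 3.3: if `u : G → ℝ` is a group homomorphism
(into the additive reals), then no finite sum `Σ λᵢ · (εᵢ·1 + δᵢ·[gᵢ])` with
`gᵢ ∈ ker u` and signs `εᵢ, δᵢ ∈ {1, -1}` can equal `1` in the group ring `ℤ[G]`. -/
theorem sum_signed_ker_combinations_ne_one
    {G : Type*} [Group G] (u : G → ℝ) (hu : ∀ a b : G, u (a * b) = u a + u b)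
    {I : Type*} [Fintype I]
    (lam : I → MonoidAlgebra ℤ G) (g : I → G) (hg : ∀ i, u (g i) = 0)
    (ε δ : I → ℤ) (hε : ∀ i, ε i = 1 ∨ ε i = -1) (hδ : ∀ i, δ i = 1 ∨ δ i = -1) :
    ∑ i : I, lam i * ((ε i : MonoidAlgebra ℤ G)
      + (δ i : MonoidAlgebra ℤ G) * MonoidAlgebra.of ℤ G (g i)) ≠ 1 :=
  sum_signed_ker_combinations_ne_one_general lam g ε δ hε hδ
end

section
/- For every group G, the left ideal of the group ring ℤ[G] generated by the set {1 + [g] : g ∈ G} ∪ {1 − [g] : g ∈ G} is a proper left ideal; that is, it does not contain the element 1. -/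
/-! The augmentation mod 2, `ℤ[G] → 𝔽₂`, `[g] ↦ 1`, is a ring hom killing every `1 ± [g]`,
so its kernel is a proper ideal containing all of them. -/

open MonoidAlgebra

theorem Ideal.one_notMem_span_of_forall_map_eq_zero {R S : Type*} [Semiring R] [Semiring S]
    [Nontrivial S] (f : R →+* S) {s : Set R} (hs : ∀ x ∈ s, f x = 0) :
    (1 : R) ∉ Ideal.span s := fun h =>
  RingHom.ker_ne_top f <|
    (Ideal.eq_top_iff_one _).2 (Ideal.span_le.2 (fun x hx => RingHom.mem_ker.2 (hs x hx)) h)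

section

variable {k A G : Type*} [CommRing k] [Ring A] [Algebra k A] [Monoid G]

theorem MonoidAlgebra.lift_one_one_sub_of (g : G) : lift k A G 1 (1 - of k G g) = 0 := by
  simp

theorem MonoidAlgebra.lift_one_one_add_of [CharP A 2] (g : G) :
    lift k A G 1 (1 + of k G g) = 0 := by
  simp [CharTwo.add_self_eq_zero]

end

/-- The left ideal of the group ring `ℤ[G]` generated by all elements
`1 + [g]` and `1 - [g]` (for `g ∈ G`) is proper: it does not contain `1`. -/
theorem one_not_mem_span_one_add_sub_of
    (G : Type*) [Group G] :
    (1 : MonoidAlgebra ℤ G) ∉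
      Ideal.span {x : MonoidAlgebra ℤ G |
        ∃ g : G, x = 1 + MonoidAlgebra.of ℤ G g ∨ x = 1 - MonoidAlgebra.of ℤ G g} := by
  refine Ideal.one_notMem_span_of_forall_map_eq_zero (lift ℤ (ZMod 2) G 1).toRingHom ?_
  rintro x ⟨g, rfl | rfl⟩
  exacts [lift_one_one_add_of g, lift_one_one_sub_of g]
end
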